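/- The graph G = G(4; 1, 2, 3, 4) satisfies a(G) = 42 and γ₂(G) = 44, hence γ₂(G) − a(G) = 2 > 1; thus G is a counterexample to the conjecture γ₂ ≤ a + 1. -/
import Mathlib


open Classical Finset
noncomputable section

/-- `S` is a 2-dominating set of `G`: every vertex outside `S` has ≥ 2 neighbors in `S`. -/
def IsTwoDomSet {V : Type*} [Fintype V] (G : SimpleGraph V) (S : Finset V) : Prop :=
  ∀ v, v ∉ S → 2 ≤ (G.neighborFinset v ∩ S).card

/-- The 2-domination number. -/
noncomputable def gamma2 {V : Type*} [Fintype V] (G : SimpleGraph V) : ℕ :=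
  sInf {k | ∃ S : Finset V, IsTwoDomSet G S ∧ S.card = k}

/-- `S` is an annihilation set of `G`: the sum of degrees over `S` is at most `m(G)`. -/
def IsAnnSet {V : Type*} [Fintype V] (G : SimpleGraph V) (S : Finset V) : Prop :=
  ∑ v ∈ S, G.degree v ≤ G.edgeFinset.card

/-- The annihilation number: the largest size of an annihilation set (equivalently, the
largest `k` such that the sum of the `k` smallest degrees is at most the edge count). -/
noncomputable def annihilation {V : Type*} [Fintype V] (G : SimpleGraph V) : ℕ :=
  sSup {k | ∃ S : Finset V, IsAnnSet G S ∧ S.card = k}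

/-- Vertices of `G(t; k₁,…,k_t)`: `none` is the hub `w`; `some (Sum.inl ⟨i, j⟩)` is the
`j`-th vertex of the `i`-th cycle `C_{3kᵢ+1}` (vertex `0` is joined to `w`);
`some (Sum.inr ⟨i, p⟩)` is the pendant vertex attached to cycle vertex `p + 1`. -/
abbrev GVert (t : ℕ) (k : Fin t → ℕ) : Type :=
  Option ((Σ i : Fin t, Fin (3 * k i + 1)) ⊕ (Σ i : Fin t, Fin (3 * k i)))

/-- The counterexample graph `G(t; k₁,…,k_t)`. -/
def GG (t : ℕ) (k : Fin t → ℕ) : SimpleGraph (GVert t k) :=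
  SimpleGraph.fromRel (fun a b =>
    match a, b with
    | none, some (Sum.inl ⟨_, j⟩) => (j : ℕ) = 0
    | some (Sum.inl ⟨i, a⟩), some (Sum.inl ⟨i', b⟩) =>
        i = i' ∧ ((b : ℕ) = (a : ℕ) + 1 ∨ ((a : ℕ) = 3 * k i ∧ (b : ℕ) = 0))
    | some (Sum.inl ⟨i, a⟩), some (Sum.inr ⟨i', p⟩) => i = i' ∧ (a : ℕ) = (p : ℕ) + 1
    | _, _ => False)

/-! ### Auxiliary decidability setup -/

/-- The defining relation of `GG`, as a standalone definition. -/
def grel (t : ℕ) (k : Fin t → ℕ) (a b : GVert t k) : Prop :=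
  match a, b with
    | none, some (Sum.inl ⟨_, j⟩) => (j : ℕ) = 0
    | some (Sum.inl ⟨i, a⟩), some (Sum.inl ⟨i', b⟩) =>
        i = i' ∧ ((b : ℕ) = (a : ℕ) + 1 ∨ ((a : ℕ) = 3 * k i ∧ (b : ℕ) = 0))
    | some (Sum.inl ⟨i, a⟩), some (Sum.inr ⟨i', p⟩) => i = i' ∧ (a : ℕ) = (p : ℕ) + 1
    | _, _ => False

instance grel.dec (t : ℕ) (k : Fin t → ℕ) : ∀ a b, Decidable (grel t k a b) := fun a b => by
  rcases a with _ | (⟨i, x⟩ | ⟨i, p⟩) <;> rcases b with _ | (⟨i', y⟩ | ⟨i', q⟩) <;>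
    unfold grel <;> infer_instance

instance GG.decAdj (t : ℕ) (k : Fin t → ℕ) : DecidableRel (GG t k).Adj := fun a b =>
  inferInstanceAs (Decidable (a ≠ b ∧ (grel t k a b ∨ grel t k b a)))

abbrev V4 := GVert 4 ![1, 2, 3, 4]
abbrev G4 := GG 4 ![1, 2, 3, 4]

/-- Pendant vertices. -/
def isPend : V4 → Bool := fun v => match v with | some (Sum.inr _) => true | _ => false
/-- Vertices of the `i`-th cycle. -/
def isCyc (i : Fin 4) : V4 → Bool := fun v =>
  match v with | some (Sum.inl ⟨i', _⟩) => i' == i | _ => false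

/-- The 2-dominating witness of size 44. -/
def inDom : V4 → Bool := fun v =>
  match v with
  | some (Sum.inr _) => true
  | some (Sum.inl ⟨_, j⟩) => (j : ℕ) = 0 ∨ (j : ℕ) % 3 = 2
  | none => false

def Sdom : Finset V4 := univ.filter (fun v => inDom v = true)

/-- The annihilating witness of size 42. -/
def inAnn : V4 → Bool := fun v =>
  match v with
  | some (Sum.inr _) => true
  | some (Sum.inl ⟨i, j⟩) => i == (3 : Fin 4) && (j : ℕ) != 0
  | none => false

def Sann : Finset V4 := univ.filter (fun v => inAnn v = true)

def Pend : Finset V4 := univ.filter (fun v => isPend v = true)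
def Ci (i : Fin 4) : Finset V4 := univ.filter (fun v => isCyc i v = true)

/-- The neighbourhood finset of `G4`, with the canonical (computable) instances. -/
def nbhd (v : V4) : Finset V4 := G4.neighborFinset v
/-- The edge finset of `G4`, with the canonical (computable) instances. -/
def edgeF : Finset (Sym2 V4) := G4.edgeFinset
/-- Intersection with the canonical `DecidableEq` instance. -/
def interF (A B : Finset V4) : Finset V4 := A ∩ B

/-! ### Facts established by computation -/

set_option maxHeartbeats 4000000 in
set_option maxRecDepth 1000000 in
lemma edge_count : edgeF.card = 68 := by decide

set_option maxHeartbeats 4000000 in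
set_option maxRecDepth 1000000 in
lemma sdom_card : Sdom.card = 44 := by decide

set_option maxHeartbeats 8000000 in
set_option maxRecDepth 1000000 in
lemma sdom_dom : ∀ v : V4, v ∉ Sdom → 2 ≤ (interF (nbhd v) Sdom).card := by decide

set_option maxHeartbeats 8000000 in
set_option maxRecDepth 1000000 in
lemma facts1 : (∀ v : V4, isPend v = true → (nbhd v).card = 1)
  ∧ (∀ i : Fin 4, (Ci i).card = 3 * (![1, 2, 3, 4] i) + 1)
  ∧ (∀ i : Fin 4, ∀ v : V4, isCyc i v = true →
      ((nbhd v).filter (fun u => ¬ isCyc i u = true)).card ≤ 1)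
  ∧ (∀ i : Fin 4, ∀ v : V4, isCyc i v = true →
      ((insert v (nbhd v)).filter (fun u => isCyc i u = true)).card ≤ 3)
  ∧ Pend.card = 30
  ∧ (∀ v : V4, 1 ≤ (nbhd v).card)
  ∧ (∀ v : V4, isPend v = false → 3 ≤ (nbhd v).card)
  ∧ Sann.card = 42
  ∧ (∑ v ∈ Sann, (nbhd v).card) ≤ 68 := by decide

set_option maxHeartbeats 1000000 in
lemma tag_facts : (∀ i : Fin 4, ∀ v : V4, ¬(isPend v = true ∧ isCyc i v = true))
  ∧ (∀ i j : Fin 4, ∀ v : V4, isCyc i v = true → isCyc j v = true → i = j) := by decide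

/-! ### Instance irrelevance -/

lemma mem_nbhd (v w : V4) : w ∈ nbhd v ↔ G4.Adj v w := by
  unfold nbhd; exact SimpleGraph.mem_neighborFinset _ _ _

lemma nbhd_irrel (v : V4) (inst : Fintype (G4.neighborSet v)) :
    @SimpleGraph.neighborFinset _ G4 v inst = nbhd v := by
  ext w
  rw [SimpleGraph.mem_neighborFinset, mem_nbhd]

/-- The canonical decidable equality on `V4`. -/
def dEq : DecidableEq V4 := inferInstance

lemma inter_irrel (d : DecidableEq V4) (A B : Finset V4) :
    @Inter.inter _ (@Finset.instInter _ d) A B = interF A B := by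
  have hd : d = dEq := Subsingleton.elim _ _
  subst hd
  rfl

lemma deg_irrel (v : V4) (inst : Fintype (G4.neighborSet v)) :
    @SimpleGraph.degree _ G4 v inst = (nbhd v).card := by
  show (@SimpleGraph.neighborFinset _ G4 v inst).card = _
  rw [nbhd_irrel]

lemma edgeFinset_irrel (inst : Fintype G4.edgeSet) :
    @SimpleGraph.edgeFinset _ G4 inst = edgeF := by
  have h : inst = G4.fintypeEdgeSet := Subsingleton.elim _ _
  subst h
  rfl

lemma twodom_iff (S : Finset V4) :
    IsTwoDomSet G4 S ↔ ∀ v, v ∉ S → 2 ≤ ((nbhd v) ∩ S).card := by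
  unfold IsTwoDomSet
  constructor
  · intro h v hv
    have := h v hv
    simp only [nbhd_irrel, inter_irrel] at this
    exact this
  · intro h v hv
    simp only [nbhd_irrel, inter_irrel]
    exact h v hv

lemma annset_iff (S : Finset V4) :
    IsAnnSet G4 S ↔ (∑ v ∈ S, (nbhd v).card) ≤ 68 := by
  unfold IsAnnSet
  simp only [deg_irrel, edgeFinset_irrel, edge_count]

/-! ### Lower bound for the 2-domination number -/

lemma pend_mem (S : Finset V4) (h2 : ∀ v, v ∉ S → 2 ≤ ((nbhd v) ∩ S).card)
    (v : V4) (hv : isPend v = true) : v ∈ S := by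
  by_contra hvS
  have h := h2 v hvS
  have hle : ((nbhd v) ∩ S).card ≤ (nbhd v).card :=
    card_le_card inter_subset_left
  have h1 := facts1.1 v hv
  omega

lemma cyc_dom (S : Finset V4) (h2 : ∀ v, v ∉ S → 2 ≤ ((nbhd v) ∩ S).card)
    (i : Fin 4) (v : V4) (hv : isCyc i v = true) (hvS : v ∉ S) :
    ∃ u, u ∈ S ∧ G4.Adj v u ∧ isCyc i u = true := by
  have h := h2 v hvS
  have hsplit : (((nbhd v) ∩ S).filter (fun u => isCyc i u = true)).card +
      (((nbhd v) ∩ S).filter (fun u => ¬ isCyc i u = true)).card = ((nbhd v) ∩ S).card := by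
    simpa using Finset.card_filter_add_card_filter_not
      (s := (nbhd v) ∩ S) (p := fun u => isCyc i u = true)
  have hsub : (((nbhd v) ∩ S).filter (fun u => ¬ isCyc i u = true)) ⊆
      ((nbhd v).filter (fun u => ¬ isCyc i u = true)) :=
    Finset.filter_subset_filter _ inter_subset_left
  have h3 := facts1.2.2.1 i v hv
  have hcard : 1 ≤ (((nbhd v) ∩ S).filter (fun u => isCyc i u = true)).card := by
    have := card_le_card hsub
    omega
  obtain ⟨u, hu⟩ := Finset.card_pos.mp hcard
  rw [mem_filter, mem_inter] at hu
  exact ⟨u, hu.1.2, (mem_nbhd _ _).mp hu.1.1, hu.2⟩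

lemma cyc_bound (S : Finset V4) (h2 : ∀ v, v ∉ S → 2 ≤ ((nbhd v) ∩ S).card)
    (i : Fin 4) : (![1, 2, 3, 4] i) + 1 ≤ (S.filter (fun v => isCyc i v = true)).card := by
  set T := S.filter (fun v => isCyc i v = true) with hT
  have hsub : Ci i ⊆ T.biUnion
      (fun u => (insert u (nbhd u)).filter (fun x => isCyc i x = true)) := by
    intro v hv
    have hvc : isCyc i v = true := (mem_filter.mp hv).2
    by_cases hvS : v ∈ S
    · exact mem_biUnion.mpr ⟨v, mem_filter.mpr ⟨hvS, hvc⟩,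
        mem_filter.mpr ⟨mem_insert_self _ _, hvc⟩⟩
    · obtain ⟨u, huS, hadj, huc⟩ := cyc_dom S h2 i v hvc hvS
      exact mem_biUnion.mpr ⟨u, mem_filter.mpr ⟨huS, huc⟩,
        mem_filter.mpr ⟨mem_insert_of_mem
          ((mem_nbhd _ _).mpr hadj.symm), hvc⟩⟩
  have h1 : (Ci i).card ≤ ∑ u ∈ T,
      ((insert u (nbhd u)).filter (fun x => isCyc i x = true)).card :=
    le_trans (card_le_card hsub) Finset.card_biUnion_le
  have h2' : ∑ u ∈ T,
      ((insert u (nbhd u)).filter (fun x => isCyc i x = true)).card ≤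
      ∑ _u ∈ T, 3 :=
    Finset.sum_le_sum fun u hu => facts1.2.2.2.1 i u (mem_filter.mp hu).2
  have hcard := facts1.2.1 i
  have hsum : ∑ _u ∈ T, 3 = 3 * T.card := by rw [Finset.sum_const, smul_eq_mul, Nat.mul_comm]
  omega

lemma gamma2_lb (S : Finset V4) (hS : IsTwoDomSet G4 S) : 44 ≤ S.card := by
  have h2 := (twodom_iff S).mp hS
  have hP : Pend ⊆ S := fun v hv => pend_mem S h2 v (mem_filter.mp hv).2
  set T : Fin 4 → Finset V4 := fun i => S.filter (fun v => isCyc i v = true) with hTdef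
  have hTsub : ∀ i, T i ⊆ S := fun i => filter_subset _ _
  have hPT : ∀ i, Disjoint Pend (T i) := fun i => disjoint_left.mpr fun v hv hv' =>
    tag_facts.1 i v ⟨(mem_filter.mp hv).2, (mem_filter.mp hv').2⟩
  have hTT : ∀ i j, i ≠ j → Disjoint (T i) (T j) := fun i j hij => disjoint_left.mpr
    fun v hv hv' => hij (tag_facts.2 i j v (mem_filter.mp hv).2 (mem_filter.mp hv').2)
  have hsubS : Pend ∪ T 0 ∪ T 1 ∪ T 2 ∪ T 3 ⊆ S := by
    intro v hv
    rcases mem_union.mp hv with hv | hv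
    rotate_left; · exact hTsub 3 hv
    rcases mem_union.mp hv with hv | hv
    rotate_left; · exact hTsub 2 hv
    rcases mem_union.mp hv with hv | hv
    rotate_left; · exact hTsub 1 hv
    rcases mem_union.mp hv with hv | hv
    · exact hP hv
    · exact hTsub 0 hv
  have hcard : (Pend ∪ T 0 ∪ T 1 ∪ T 2 ∪ T 3).card =
      Pend.card + (T 0).card + (T 1).card + (T 2).card + (T 3).card := by
    rw [card_union_of_disjoint, card_union_of_disjoint, card_union_of_disjoint,
      card_union_of_disjoint]
    · exact hPT 0
    · exact disjoint_union_left.mpr ⟨hPT 1, hTT 0 1 (by decide)⟩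
    · exact disjoint_union_left.mpr ⟨disjoint_union_left.mpr ⟨hPT 2, hTT 0 2 (by decide)⟩,
        hTT 1 2 (by decide)⟩
    · exact disjoint_union_left.mpr ⟨disjoint_union_left.mpr
        ⟨disjoint_union_left.mpr ⟨hPT 3, hTT 0 3 (by decide)⟩, hTT 1 3 (by decide)⟩,
        hTT 2 3 (by decide)⟩
  have hle := card_le_card hsubS
  have hp30 := facts1.2.2.2.2.1
  have h0 : 2 ≤ (T 0).card := by simpa using cyc_bound S h2 0
  have h1 : 3 ≤ (T 1).card := by simpa using cyc_bound S h2 1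
  have h2' : 4 ≤ (T 2).card := by simpa using cyc_bound S h2 2
  have h3 : 5 ≤ (T 3).card := by simpa using cyc_bound S h2 3
  omega

/-! ### Upper bound for annihilation number -/

lemma ann_ub (S : Finset V4) (hS : IsAnnSet G4 S) : S.card ≤ 42 := by
  have h := (annset_iff S).mp hS
  have hsplit : (S.filter (fun v => isPend v = true)).card +
      (S.filter (fun v => ¬ isPend v = true)).card = S.card := by
    simpa using Finset.card_filter_add_card_filter_not
      (s := S) (p := fun v => isPend v = true)
  have hsum : (∑ v ∈ S.filter (fun v => isPend v = true), (nbhd v).card) +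
      (∑ v ∈ S.filter (fun v => ¬ isPend v = true), (nbhd v).card) =
      ∑ v ∈ S, (nbhd v).card := by
    simpa using Finset.sum_filter_add_sum_filter_not S (fun v => isPend v = true)
      (fun v => (nbhd v).card)
  have hP1 : (S.filter (fun v => isPend v = true)).card ≤
      ∑ v ∈ S.filter (fun v => isPend v = true), (nbhd v).card := by
    calc (S.filter (fun v => isPend v = true)).card
        = ∑ _v ∈ S.filter (fun v => isPend v = true), 1 := Finset.card_eq_sum_ones _
      _ ≤ _ := Finset.sum_le_sum fun v _ => facts1.2.2.2.2.2.1 v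
  have hP3 : 3 * (S.filter (fun v => ¬ isPend v = true)).card ≤
      ∑ v ∈ S.filter (fun v => ¬ isPend v = true), (nbhd v).card := by
    calc 3 * (S.filter (fun v => ¬ isPend v = true)).card
        = ∑ _v ∈ S.filter (fun v => ¬ isPend v = true), 3 := by
          rw [Finset.sum_const, smul_eq_mul, Nat.mul_comm]
      _ ≤ _ := Finset.sum_le_sum fun v hv => facts1.2.2.2.2.2.2.1 v
          (by simpa using (mem_filter.mp hv).2)
  have hPle : (S.filter (fun v => isPend v = true)).card ≤ 30 := by
    have : S.filter (fun v => isPend v = true) ⊆ Pend := fun v hv =>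
      mem_filter.mpr ⟨mem_univ _, (mem_filter.mp hv).2⟩
    have := card_le_card this
    have := facts1.2.2.2.2.1
    omega
  omega

/-! ### Main theorem -/

/-- The graph `G(4;1,2,3,4)` satisfies `a(G) = 42` and `γ₂(G) = 44`, hence
`γ₂(G) − a(G) = 2 > 1`: a counterexample to the conjecture `γ₂ ≤ a + 1`. -/
theorem stmt14 :
    annihilation (GG 4 ![1, 2, 3, 4]) = 42 ∧
    gamma2 (GG 4 ![1, 2, 3, 4]) = 44 ∧
    gamma2 (GG 4 ![1, 2, 3, 4]) - annihilation (GG 4 ![1, 2, 3, 4]) = 2 ∧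
    ¬ gamma2 (GG 4 ![1, 2, 3, 4]) ≤ annihilation (GG 4 ![1, 2, 3, 4]) + 1 := by
  have hannmem : (42 : ℕ) ∈ {k | ∃ S : Finset V4, IsAnnSet G4 S ∧ S.card = k} :=
    ⟨Sann, (annset_iff Sann).mpr facts1.2.2.2.2.2.2.2.2, facts1.2.2.2.2.2.2.2.1⟩
  have hannbd : ∀ k ∈ {k | ∃ S : Finset V4, IsAnnSet G4 S ∧ S.card = k}, k ≤ 42 := by
    rintro k ⟨S, hS, rfl⟩; exact ann_ub S hS
  have hann : annihilation (GG 4 ![1, 2, 3, 4]) = 42 := by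
    refine le_antisymm (csSup_le ⟨42, hannmem⟩ hannbd) (le_csSup ⟨42, ?_⟩ hannmem)
    exact fun k hk => hannbd k hk
  have hdommem : (44 : ℕ) ∈ {k | ∃ S : Finset V4, IsTwoDomSet G4 S ∧ S.card = k} :=
    ⟨Sdom, (twodom_iff Sdom).mpr sdom_dom, sdom_card⟩
  have hg : gamma2 (GG 4 ![1, 2, 3, 4]) = 44 := by
    refine le_antisymm (Nat.sInf_le hdommem) (le_csInf ⟨44, hdommem⟩ ?_)
    rintro k ⟨S, hS, rfl⟩; exact gamma2_lb S hS
  refine ⟨hann, hg, ?_, ?_⟩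
  · rw [hann, hg]
  · rw [hann, hg]; norm_num
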